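/- (Parallel mean curvature identities) Let u : B₁ → ℝ^m be a smooth conformal immersion (|u_x|² = |u_y|² = ρ² > 0 and ⟨u_x,u_y⟩ = 0 everywhere) with mean curvature vector H : B₁ → ℝ^m defined by Δu = −2ρ²H, and suppose H is normal (⟨H,u_x⟩ = ⟨H,u_y⟩ = 0) and u has parallel mean curvature, i.e. H_x(z) and H_y(z) lie in span{u_x(z), u_y(z)} for every z. Then for all indices i, j: (1) H^i_x u^j_y − H^j_x u^i_y + H^j_y u^i_x − H^i_y u^j_x = 2|H|² (u^i_x u^j_y − u^i_y u^j_x) (i.e. dω_H = 2|H|² du^i ∧ du^j); and (2) H^i_x u^j_x − H^j_x u^i_x + H^i_y u^j_y − H^j_y u^i_y = 0 (i.e. d*ω_H = 0), where ω_H^i_j := H^i du^j − H^j du^i. -/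

import Mathlib

open Complex Metric
open scoped RealInnerProductSpace

noncomputable section

/-- Euclidean space `ℝ^m`. -/
abbrev EucSp (m : ℕ) := EuclideanSpace ℝ (Fin m)

/-- The open unit disc in `ℂ ≅ ℝ²`. -/
def unitDisc : Set ℂ := Metric.ball 0 1

/-- **parallel mean curvature identities.** For a smooth conformal immersion
`u : B₁ → ℝ^m` with normal, parallel mean curvature vector `H` one has, in components,
`dω_H = 2|H|² du^i ∧ du^j` and `d*ω_H = 0`, where `ω_H{}^i_j = H^i du^j − H^j du^i`. -/
theorem statement18 (m : ℕ)
    (u H : ℂ → EucSp m)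
    (hu : ContDiffOn ℝ (⊤ : ℕ∞) u unitDisc) (hH : ContDiffOn ℝ 1 H unitDisc)
    (ux uy uxx uyy Hx Hy : ℂ → EucSp m)
    (hux : ux = fun z => fderivWithin ℝ u unitDisc z 1)
    (huy : uy = fun z => fderivWithin ℝ u unitDisc z Complex.I)
    (huxx : uxx = fun z => fderivWithin ℝ ux unitDisc z 1)
    (huyy : uyy = fun z => fderivWithin ℝ uy unitDisc z Complex.I)
    (hHx : Hx = fun z => fderivWithin ℝ H unitDisc z 1)
    (hHy : Hy = fun z => fderivWithin ℝ H unitDisc z Complex.I)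
    -- u is a conformal immersion
    (hconf : ∀ z ∈ unitDisc, ⟪ux z, uy z⟫ = 0 ∧ ‖ux z‖ = ‖uy z‖ ∧ 0 < ‖ux z‖)
    -- H is the mean curvature vector: Δu = −2ρ²H
    (hmean : ∀ z ∈ unitDisc, uxx z + uyy z = (-2 * ‖ux z‖ ^ 2) • H z)
    -- H is normal
    (hnormal : ∀ z ∈ unitDisc, ⟪H z, ux z⟫ = 0 ∧ ⟪H z, uy z⟫ = 0)
    -- H is parallel: H_x, H_y ∈ span{u_x, u_y}
    (hpar : ∀ z ∈ unitDisc,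
      Hx z ∈ Submodule.span ℝ {ux z, uy z} ∧ Hy z ∈ Submodule.span ℝ {ux z, uy z}) :
    ∀ z ∈ unitDisc, ∀ i j : Fin m,
      (Hx z i * uy z j - Hx z j * uy z i + Hy z j * ux z i - Hy z i * ux z j
        = 2 * ‖H z‖ ^ 2 * (ux z i * uy z j - uy z i * ux z j)) ∧
      (Hx z i * ux z j - Hx z j * ux z i + Hy z i * uy z j - Hy z j * uy z i = 0) := by
  intro z hz
  have hsopen : IsOpen unitDisc := isOpen_ball
  have hmem : unitDisc ∈ nhds z := hsopen.mem_nhds hz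
  set Du : ℂ → ℂ →L[ℝ] EucSp m := fderiv ℝ u with hDudef
  -- pointwise identifications on the disc
  have hux_eq : ∀ w ∈ unitDisc, ux w = Du w 1 := by
    intro w hw; rw [hux]; simp [hDudef, fderivWithin_of_isOpen hsopen hw]
  have huy_eq : ∀ w ∈ unitDisc, uy w = Du w Complex.I := by
    intro w hw; rw [huy]; simp [hDudef, fderivWithin_of_isOpen hsopen hw]
  have hHx_eq : Hx z = fderiv ℝ H z 1 := by
    rw [hHx]; simp [fderivWithin_of_isOpen hsopen hz]
  have hHy_eq : Hy z = fderiv ℝ H z Complex.I := by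
    rw [hHy]; simp [fderivWithin_of_isOpen hsopen hz]
  -- regularity
  have huz : ContDiffAt ℝ (⊤ : ℕ∞) u z := hu.contDiffAt hmem
  have hHz : DifferentiableAt ℝ H z := (hH.contDiffAt hmem).differentiableAt one_ne_zero
  have hDu : ContDiffAt ℝ 1 Du z := huz.fderiv_right (WithTop.coe_le_coe.mpr le_top)
  have hDud : DifferentiableAt ℝ Du z := hDu.differentiableAt one_ne_zero
  set F : ℂ →L[ℝ] ℂ →L[ℝ] EucSp m := fderiv ℝ Du z with hFdef
  -- derivatives of w ↦ Du w v
  have hdg : ∀ v w : ℂ, fderiv ℝ (fun t => Du t v) z w = F w v := by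
    intro v w
    rw [fderiv_clm_apply hDud (differentiableAt_const v)]
    simp [hFdef]
  -- second derivatives
  have huxx_eq : uxx z = F 1 1 := by
    rw [huxx, ← hdg 1 1]
    have h : fderivWithin ℝ ux unitDisc z = fderivWithin ℝ (fun w => Du w 1) unitDisc z :=
      fderivWithin_congr (fun w hw => hux_eq w hw) (hux_eq z hz)
    simp only [h, fderivWithin_of_isOpen hsopen hz]
  have huyy_eq : uyy z = F Complex.I Complex.I := by
    rw [huyy, ← hdg Complex.I Complex.I]
    have h : fderivWithin ℝ uy unitDisc z = fderivWithin ℝ (fun w => Du w Complex.I) unitDisc z :=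
      fderivWithin_congr (fun w hw => huy_eq w hw) (huy_eq z hz)
    simp only [h, fderivWithin_of_isOpen hsopen hz]
  -- symmetry of second derivative
  have hsymm : F 1 Complex.I = F Complex.I 1 :=
    (huz.isSymmSndFDerivAt (by rw [minSmoothness_of_isRCLikeNormedField]; exact WithTop.coe_le_coe.mpr le_top)) 1 Complex.I
  -- differentiating the normality relations
  have key : ∀ v : ℂ, (∀ t ∈ unitDisc, ⟪H t, Du t v⟫ = 0) →
      ∀ w : ℂ, ⟪H z, F w v⟫ + ⟪fderiv ℝ H z w, Du z v⟫ = 0 := by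
    intro v hv w
    have hgv : DifferentiableAt ℝ (fun t => Du t v) z :=
      hDud.clm_apply (differentiableAt_const _)
    have hev : (fun t => ⟪H t, Du t v⟫) =ᶠ[nhds z] (fun _ => (0 : ℝ)) := by
      filter_upwards [hmem] with t ht using hv t ht
    have h0 : fderiv ℝ (fun t => ⟪H t, Du t v⟫) z = 0 := by
      rw [hev.fderiv_eq]; exact fderiv_const_apply 0
    have h1 := fderiv_inner_apply (𝕜 := ℝ) hHz hgv w
    rw [h0, hdg] at h1
    simpa using h1.symm
  have keyx : ∀ w : ℂ, ⟪H z, F w 1⟫ + ⟪fderiv ℝ H z w, ux z⟫ = 0 := by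
    intro w
    have := key 1 (fun t ht => by rw [← hux_eq t ht]; exact (hnormal t ht).1) w
    rwa [← hux_eq z hz] at this
  have keyy : ∀ w : ℂ, ⟪H z, F w Complex.I⟫ + ⟪fderiv ℝ H z w, uy z⟫ = 0 := by
    intro w
    have := key Complex.I (fun t ht => by rw [← huy_eq t ht]; exact (hnormal t ht).2) w
    rwa [← huy_eq z hz] at this
  -- four scalar relations
  have E1 : ⟪H z, uxx z⟫ + ⟪Hx z, ux z⟫ = 0 := by
    rw [huxx_eq, hHx_eq]; exact keyx 1
  have E2 : ⟪H z, uyy z⟫ + ⟪Hy z, uy z⟫ = 0 := by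
    rw [huyy_eq, hHy_eq]; exact keyy Complex.I
  have E3 : ⟪Hx z, uy z⟫ = ⟪Hy z, ux z⟫ := by
    have h1 := keyy 1
    have h2 := keyx Complex.I
    rw [hsymm] at h1
    rw [hHx_eq, hHy_eq]
    linarith
  have E4 : ⟪H z, uxx z⟫ + ⟪H z, uyy z⟫ = -2 * ‖ux z‖ ^ 2 * ‖H z‖ ^ 2 := by
    have := hmean z hz
    have h := congrArg (fun v => ⟪H z, v⟫) this
    simp only [inner_add_right, real_inner_smul_right, real_inner_self_eq_norm_sq] at h
    linarith
  -- span coefficients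
  obtain ⟨a, b, hab⟩ := Submodule.mem_span_pair.mp (hpar z hz).1
  obtain ⟨c, d, hcd⟩ := Submodule.mem_span_pair.mp (hpar z hz).2
  obtain ⟨ho, hnn, hpos⟩ := hconf z hz
  set ρ2 : ℝ := ‖ux z‖ ^ 2 with hρ2
  have hρpos : 0 < ρ2 := by positivity
  have hoyx : ⟪uy z, ux z⟫ = 0 := by rw [real_inner_comm]; exact ho
  have hyy : ⟪uy z, uy z⟫ = ρ2 := by rw [real_inner_self_eq_norm_sq, ← hnn]
  have hxx : ⟪ux z, ux z⟫ = ρ2 := real_inner_self_eq_norm_sq _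
  have iHxx : ⟪Hx z, ux z⟫ = a * ρ2 := by
    rw [← hab, inner_add_left, real_inner_smul_left, real_inner_smul_left, hoyx, hxx]; ring
  have iHxy : ⟪Hx z, uy z⟫ = b * ρ2 := by
    rw [← hab, inner_add_left, real_inner_smul_left, real_inner_smul_left, ho, hyy]; ring
  have iHyx : ⟪Hy z, ux z⟫ = c * ρ2 := by
    rw [← hcd, inner_add_left, real_inner_smul_left, real_inner_smul_left, hoyx, hxx]; ring
  have iHyy : ⟪Hy z, uy z⟫ = d * ρ2 := by
    rw [← hcd, inner_add_left, real_inner_smul_left, real_inner_smul_left, ho, hyy]; ring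
  have hbc : b = c := by
    have := E3
    rw [iHxy, iHyx] at this
    exact mul_right_cancel₀ (ne_of_gt hρpos) this
  have had : a + d = 2 * ‖H z‖ ^ 2 := by
    have h : a * ρ2 + d * ρ2 = 2 * ρ2 * ‖H z‖ ^ 2 := by
      rw [iHxx] at E1; rw [iHyy] at E2; linarith
    have h2 : (a + d) * ρ2 = (2 * ‖H z‖ ^ 2) * ρ2 := by ring_nf; ring_nf at h; linarith
    exact mul_right_cancel₀ (ne_of_gt hρpos) h2
  -- componentwise
  have cHx : ∀ i, Hx z i = a * ux z i + b * uy z i := by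
    intro i; rw [← hab]; simp
  have cHy : ∀ i, Hy z i = c * ux z i + d * uy z i := by
    intro i; rw [← hcd]; simp
  intro i j
  constructor
  · rw [cHx i, cHx j, cHy i, cHy j]
    linear_combination (ux z i * uy z j - uy z i * ux z j) * had
  · rw [cHx i, cHx j, cHy i, cHy j]
    linear_combination (uy z i * ux z j - ux z i * uy z j) * hbc
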